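/- Let a, b ∈ ℂ and r, s > 0 satisfy r + |a| ≤ 1, s + |b| ≤ 1, and r + s ≤ |a − b| (so the open disks B_r(a) and B_s(b) are contained in 𝔻 and are disjoint). Then the function (z, w) ↦ r·s/((r z + a) − (s w + b))² is square-integrable on 𝔻 × 𝔻 if and only if r + s < |a − b|, i.e., if and only if the closed disks of radius r about a and radius s about b are disjoint. -/

import Mathlib

open MeasureTheory Complex Set

noncomputable section

/-- The open unit disk in ℂ. -/
def unitDisk : Set ℂ := {z : ℂ | ‖z‖ < 1}

/-- The normalized area measure `π⁻¹ · (2-dimensional Lebesgue measure)` on ℂ. -/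
def μB : Measure ℂ := (ENNReal.ofReal (Real.pi)⁻¹) • (volume : Measure ℂ)

/-!
Write `D = (r z + a) − (s w + b)`. If `r + s < |a − b|`, then `|D| ≥ |a − b| − (r + s) > 0` on
`𝔻 × 𝔻`, so the kernel is bounded there. If the disks touch, `a − b = (r + s) u` with `|u| = 1`,
and for `z ∈ B_{t/2}((t − 1) u)`, `w ∈ B_{t/2}((1 − t) u)` (preimages of two small disks at the
point of contact) we get `(r + s) t / 2 < |D| < 3 (r + s) t / 2`. The squared kernel is thus
`≳ t⁻⁴` on a set of measure `t⁴ / 16`, so these sets carry a fixed amount of the integral while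
their measure tends to `0`, which contradicts the absolute continuity of the integral.
-/

open Metric Filter Topology ENNReal

theorem not_integrableOn_of_le_setLIntegral {α ι E : Type*} [MeasurableSpace α]
    [NormedAddCommGroup E] {μ : Measure α} {f : α → E} {S : Set α} {l : Filter ι} [l.NeBot]
    {T : ι → Set α} {c : ℝ≥0∞} (hc : c ≠ 0) (hTS : ∀ᶠ i in l, T i ⊆ S)
    (hT : Tendsto (fun i => μ (T i)) l (𝓝 0))
    (hle : ∀ᶠ i in l, c ≤ ∫⁻ x in T i, ‖f x‖ₑ ∂μ) : ¬ IntegrableOn f S μ := by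
  intro hf
  have hTS' : Tendsto (μ.restrict S ∘ T) l (𝓝 0) :=
    hT.congr' (hTS.mono fun i hi => (Measure.restrict_eq_self μ hi).symm)
  have hlim := tendsto_setLIntegral_zero hf.2.ne hTS'
  refine hc (nonpos_iff_eq_zero.mp (ge_of_tendsto hlim ?_))
  filter_upwards [hTS, hle] with i hi hci
  rwa [Measure.restrict_restrict_of_subset hi]

instance : SFinite μB := by unfold μB; infer_instance

theorem unitDisk_eq_ball : unitDisk = ball 0 1 := by
  ext z
  simp [unitDisk]

theorem μB_ball (c : ℂ) (ρ : ℝ) : μB (ball c ρ) = ENNReal.ofReal ρ ^ 2 := by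
  rw [μB, Measure.smul_apply, smul_eq_mul, Complex.volume_ball, mul_comm, mul_assoc,
    ← ENNReal.ofReal_coe_nnreal, NNReal.coe_real_pi, ← ENNReal.ofReal_mul Real.pi_pos.le,
    mul_inv_cancel₀ Real.pi_ne_zero, ENNReal.ofReal_one, mul_one]

def diskKernel (a b : ℂ) (r s : ℝ) (p : ℂ × ℂ) : ℂ :=
  (r : ℂ) * (s : ℂ) / (((r : ℂ) * p.1 + a) - ((s : ℂ) * p.2 + b)) ^ 2

theorem norm_diskKernel {a b : ℂ} {r s : ℝ} (hr : 0 ≤ r) (hs : 0 ≤ s) (p : ℂ × ℂ) :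
    ‖diskKernel a b r s p‖ = r * s / ‖((r : ℂ) * p.1 + a) - ((s : ℂ) * p.2 + b)‖ ^ 2 := by
  rw [diskKernel, norm_div, norm_pow, norm_mul, norm_real, norm_real, Real.norm_of_nonneg hr,
    Real.norm_of_nonneg hs]

theorem sub_le_norm_affine_sub {a b z w : ℂ} {r s : ℝ} (hr : 0 ≤ r) (hs : 0 ≤ s)
    (hz : ‖z‖ ≤ 1) (hw : ‖w‖ ≤ 1) :
    ‖a - b‖ - (r + s) ≤ ‖((r : ℂ) * z + a) - ((s : ℂ) * w + b)‖ := by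
  have hrz : ‖(r : ℂ) * z‖ ≤ r := by
    rw [norm_mul, norm_real, Real.norm_of_nonneg hr]; exact mul_le_of_le_one_right hr hz
  have hsw : ‖(s : ℂ) * w‖ ≤ s := by
    rw [norm_mul, norm_real, Real.norm_of_nonneg hs]; exact mul_le_of_le_one_right hs hw
  set D := ((r : ℂ) * z + a) - ((s : ℂ) * w + b)
  have hab : a - b = D - ((r : ℂ) * z - (s : ℂ) * w) := by ring
  rw [hab]
  linarith [norm_sub_le D ((r : ℂ) * z - (s : ℂ) * w), norm_sub_le ((r : ℂ) * z) ((s : ℂ) * w)]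

theorem integrableOn_diskKernel_sq {a b : ℂ} {r s : ℝ} (hr : 0 ≤ r) (hs : 0 ≤ s)
    (hlt : r + s < ‖a - b‖) :
    IntegrableOn (fun p => ‖diskKernel a b r s p‖ ^ 2) (unitDisk ×ˢ unitDisk) (μB.prod μB) := by
  set d := ‖a - b‖ - (r + s)
  have hd : 0 < d := sub_pos.mpr hlt
  rw [unitDisk_eq_ball]
  refine Measure.integrableOn_of_bounded (M := (r * s / d ^ 2) ^ 2) ?_ ?_ ?_
  · rw [Measure.prod_prod, μB_ball]
    finiteness
  · exact Measurable.aestronglyMeasurable (by unfold diskKernel; fun_prop)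
  · refine ae_restrict_of_forall_mem (measurableSet_ball.prod measurableSet_ball) ?_
    rintro p ⟨hz, hw⟩
    have hD := sub_le_norm_affine_sub (a := a) (b := b) hr hs (mem_ball_zero_iff.mp hz).le
      (mem_ball_zero_iff.mp hw).le
    rw [Real.norm_of_nonneg (by positivity), norm_diskKernel hr hs]
    gcongr

theorem ball_smul_subset_unitDisk {u : ℂ} (hu : ‖u‖ = 1) {t : ℝ} (ht₀ : 0 < t) (ht₁ : t ≤ 1) :
    ball ((t - 1) • u) (t / 2) ⊆ unitDisk := by
  intro z hz
  have hc : ‖(t - 1) • u‖ = 1 - t := by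
    rw [norm_smul, hu, mul_one, Real.norm_of_nonpos (by linarith), neg_sub]
  have := norm_le_norm_add_norm_sub' z ((t - 1) • u)
  have := mem_ball_iff_norm.mp hz
  show ‖z‖ < 1
  linarith

theorem norm_affine_sub_mem_Ioo {a b u z w : ℂ} {r s t : ℝ} (hr : 0 < r) (hs : 0 < s)
    (hab : a - b = (r + s) • u) (hu : ‖u‖ = 1) (ht : 0 < t)
    (hz : z ∈ ball ((t - 1) • u) (t / 2)) (hw : w ∈ ball ((1 - t) • u) (t / 2)) :
    ‖((r : ℂ) * z + a) - ((s : ℂ) * w + b)‖ ∈ Ioo ((r + s) * t / 2) (3 * (r + s) * t / 2) := by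
  set D := ((r : ℂ) * z + a) - ((s : ℂ) * w + b)
  have hD : D - ((r + s) * t) • u = r • (z - (t - 1) • u) - s • (w - (1 - t) • u) := by
    simp only [D, real_smul] at hab ⊢
    push_cast at hab ⊢
    linear_combination hab
  have hc : ‖((r + s) * t) • u‖ = (r + s) * t := by
    rw [norm_smul, hu, mul_one, Real.norm_of_nonneg (by positivity)]
  have herr : ‖D - ((r + s) * t) • u‖ < (r + s) * t / 2 := by
    rw [hD]
    calc ‖r • (z - (t - 1) • u) - s • (w - (1 - t) • u)‖
        ≤ r * ‖z - (t - 1) • u‖ + s * ‖w - (1 - t) • u‖ := by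
          refine (norm_sub_le _ _).trans_eq ?_
          rw [norm_smul, norm_smul, Real.norm_of_nonneg hr.le, Real.norm_of_nonneg hs.le]
      _ < r * (t / 2) + s * (t / 2) := by
          gcongr
          exacts [mem_ball_iff_norm.mp hz, mem_ball_iff_norm.mp hw]
      _ = (r + s) * t / 2 := by ring
  have := norm_le_norm_add_norm_sub' D (((r + s) * t) • u)
  have := norm_le_norm_add_norm_sub' (((r + s) * t) • u) D
  rw [norm_sub_rev _ D] at this
  constructor <;> linarith

theorem le_norm_diskKernel_sq {a b u z w : ℂ} {r s t : ℝ} (hr : 0 < r) (hs : 0 < s)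
    (hab : a - b = (r + s) • u) (hu : ‖u‖ = 1) (ht : 0 < t)
    (hz : z ∈ ball ((t - 1) • u) (t / 2)) (hw : w ∈ ball ((1 - t) • u) (t / 2)) :
    (r * s / (3 * (r + s) * t / 2) ^ 2) ^ 2 ≤ ‖diskKernel a b r s (z, w)‖ ^ 2 := by
  obtain ⟨hlow, hupp⟩ := norm_affine_sub_mem_Ioo hr hs hab hu ht hz hw
  rw [norm_diskKernel hr.le hs.le]
  -- needed since the kernel takes the junk value `0` where the denominator vanishes
  have : 0 < ‖((r : ℂ) * z + a) - ((s : ℂ) * w + b)‖ := by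
    refine lt_trans ?_ hlow; positivity
  gcongr

theorem not_integrableOn_diskKernel_sq {a b : ℂ} {r s : ℝ} (hr : 0 < r) (hs : 0 < s)
    (heq : ‖a - b‖ = r + s) :
    ¬ IntegrableOn (fun p => ‖diskKernel a b r s p‖ ^ 2) (unitDisk ×ˢ unitDisk) (μB.prod μB) := by
  have hrs : 0 < r + s := add_pos hr hs
  set u := (r + s)⁻¹ • (a - b)
  have hu : ‖u‖ = 1 := by
    rw [norm_smul, heq, norm_inv, Real.norm_of_nonneg hrs.le, inv_mul_cancel₀ hrs.ne']
  have hab : a - b = (r + s) • u := by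
    rw [smul_smul, mul_inv_cancel₀ hrs.ne', one_smul]
  set T : ℝ → Set (ℂ × ℂ) := fun t => ball ((t - 1) • u) (t / 2) ×ˢ ball ((1 - t) • u) (t / 2)
  have hμT (t : ℝ) : (μB.prod μB) (T t) = ENNReal.ofReal (t / 2) ^ 4 := by
    rw [Measure.prod_prod, μB_ball, μB_ball, ← pow_add]
  refine not_integrableOn_of_le_setLIntegral (l := 𝓝[>] 0) (T := T)
    (c := ENNReal.ofReal ((r * s / (9 * (r + s) ^ 2)) ^ 2)) ?_ ?_ ?_ ?_
  · exact (ENNReal.ofReal_pos.mpr (by positivity)).ne'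
  · filter_upwards [Ioc_mem_nhdsGT one_pos] with t ⟨ht₀, ht₁⟩
    have hw := ball_smul_subset_unitDisk ((norm_neg u).trans hu) ht₀ ht₁
    rw [smul_neg, ← neg_smul, neg_sub] at hw
    exact prod_mono (ball_smul_subset_unitDisk hu ht₀ ht₁) hw
  · simp only [hμT]
    refine tendsto_nhdsWithin_of_tendsto_nhds ?_
    have : Continuous fun t : ℝ => ENNReal.ofReal (t / 2) ^ 4 :=
      (ENNReal.continuous_pow 4).comp (ENNReal.continuous_ofReal.comp (continuous_id.div_const 2))
    simpa using this.tendsto 0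
  · filter_upwards [self_mem_nhdsWithin] with t (ht : 0 < t)
    calc ENNReal.ofReal ((r * s / (9 * (r + s) ^ 2)) ^ 2)
        = ENNReal.ofReal ((r * s / (3 * (r + s) * t / 2) ^ 2) ^ 2) * (μB.prod μB) (T t) := by
          rw [hμT, ← ENNReal.ofReal_pow (by positivity), ← ENNReal.ofReal_mul (by positivity)]
          congr 1
          field_simp
          ring
      _ ≤ ∫⁻ p in T t, ‖‖diskKernel a b r s p‖ ^ 2‖ₑ ∂(μB.prod μB) := by
          rw [← setLIntegral_const]
          refine setLIntegral_mono' (measurableSet_ball.prod measurableSet_ball) ?_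
          rintro ⟨z, w⟩ ⟨hz, hw⟩
          rw [Real.enorm_of_nonneg (by positivity)]
          exact ENNReal.ofReal_le_ofReal (le_norm_diskKernel_sq hr hs hab hu ht hz hw)

theorem statement_18_general (a b : ℂ) (r s : ℝ) (hr : 0 < r) (hs : 0 < s)
    (hsep : r + s ≤ ‖a - b‖) :
    IntegrableOn
        (fun p : ℂ × ℂ =>
          ‖((r : ℂ) * (s : ℂ)) / (((r : ℂ) * p.1 + a) - ((s : ℂ) * p.2 + b)) ^ 2‖ ^ 2)
        (unitDisk ×ˢ unitDisk) (μB.prod μB)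
      ↔ r + s < ‖a - b‖ :=
  ⟨fun hint => hsep.lt_of_ne fun heq => not_integrableOn_diskKernel_sq hr hs heq.symm hint,
    integrableOn_diskKernel_sq hr.le hs.le⟩

/-- For disks `B_r(a), B_s(b) ⊆ 𝔻` with `r + s ≤ |a − b|`, the kernel
`(z,w) ↦ rs/((rz+a) − (sw+b))²` is square-integrable on `𝔻 × 𝔻` iff
`r + s < |a − b|`, i.e. iff the closed disks are disjoint. -/
theorem statement_18 (a b : ℂ) (r s : ℝ) (hr : 0 < r) (hs : 0 < s)
    (hra : r + ‖a‖ ≤ 1) (hsb : s + ‖b‖ ≤ 1)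
    (hsep : r + s ≤ ‖a - b‖) :
    IntegrableOn
        (fun p : ℂ × ℂ =>
          ‖((r : ℂ) * (s : ℂ)) / (((r : ℂ) * p.1 + a) - ((s : ℂ) * p.2 + b)) ^ 2‖ ^ 2)
        (unitDisk ×ˢ unitDisk) (μB.prod μB)
      ↔ r + s < ‖a - b‖ :=
  statement_18_general a b r s hr hs hsep
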